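/- Let G be a finite simple graph whose vertex set is partitioned into blocks C_0, C_1, …, C_k with k ≥ 1, and let G' be the graph constructed from G as described. Then every dominating set D of G' of size k satisfies |D ∩ (C_i ∪ {a_i})| = 1 for every 1 ≤ i ≤ k, and D contains no vertex outside ⋃_{i=1}^{k} (C_i ∪ {a_i}). -/

import Mathlib

/-- `D` is a dominating set: every vertex is in `D` or adjacent to a vertex of `D`. -/
def IsDominating {V : Type*} (G : SimpleGraph V) (D : Set V) : Prop :=
  ∀ v, v ∈ D ∨ ∃ u ∈ D, G.Adj u v

/-- Base relation for the construction: keep the edges of `G`; make each block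
`C i`, `i ≥ 1`, a clique; add a new vertex `aᵢ` (encoded `Sum.inr i`) adjacent
exactly to `C i` for `i ≥ 1`; and add a new vertex `a₀` adjacent to every
vertex of `C 0 ∪ C 1 ∪ … ∪ C k`. -/
def colorRel {V : Type*} {k : ℕ} (G : SimpleGraph V) (C : Fin (k + 1) → Set V) :
    V ⊕ Fin (k + 1) → V ⊕ Fin (k + 1) → Prop
  | .inl u, .inl v => G.Adj u v ∨ ∃ i, i ≠ 0 ∧ u ∈ C i ∧ v ∈ C i
  | .inr i, .inl u => (i = 0 ∧ u ∈ ⋃ j, C j) ∨ (i ≠ 0 ∧ u ∈ C i)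
  | _, _ => False

/-- The graph `G'` constructed from `G` and its blocks. -/
def colorGraph {V : Type*} {k : ℕ} (G : SimpleGraph V)
    (C : Fin (k + 1) → Set V) : SimpleGraph (V ⊕ Fin (k + 1)) :=
  SimpleGraph.fromRel (colorRel G C)

/-! The sets `C i ∪ {aᵢ}`, `i ≠ 0`, are pairwise disjoint, and a dominating set must meet each of
them because every neighbour of `aᵢ` lies in `C i`. A set of size `k` meeting `k` pairwise
disjoint sets meets each of them in a single point and has no point outside them: otherwise
some point could be deleted and the smaller set would still meet all of them. -/

namespace Set.PairwiseDisjoint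

variable {ι α : Type*} {s : Finset ι} {B : ι → Set α} {D : Set α}

theorem card_le_ncard_of_inter_nonempty (hB : (s : Set ι).PairwiseDisjoint B)
    (hD : D.Finite) (hmeet : ∀ i ∈ s, (D ∩ B i).Nonempty) : s.card ≤ D.ncard := by
  choose x hx using hmeet
  have hinj : (s.attach : Set s).InjOn fun i : s => x i i.2 :=
    fun i _ j _ (hij : x i i.2 = x j j.2) => Subtype.ext <| hB.elim i.2 j.2 <|
      Set.not_disjoint_iff.2 ⟨x j j.2, hij ▸ (hx i i.2).2, (hx j j.2).2⟩
  calc s.card = s.attach.card := s.card_attach.symm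
    _ ≤ hD.toFinset.card :=
      Finset.card_le_card_of_injOn _ (fun i _ => hD.mem_toFinset.2 (hx i i.2).1) hinj
    _ = D.ncard := (Set.ncard_eq_toFinset_card D hD).symm

theorem exists_inter_eq_singleton_of_ncard_le (hB : (s : Set ι).PairwiseDisjoint B)
    (hD : D.Finite) (hmeet : ∀ i ∈ s, (D ∩ B i).Nonempty) (hcard : D.ncard ≤ s.card)
    {w : α} (hw : w ∈ D) : ∃ i ∈ s, D ∩ B i = {w} := by
  by_contra! hne
  have hmeet' : ∀ i ∈ s, (D \ {w} ∩ B i).Nonempty := by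
    intro i hi
    obtain ⟨z, ⟨hzD, hzB⟩, hzw⟩ : ∃ z ∈ D ∩ B i, z ≠ w := by
      by_contra! h
      exact hne i hi (Set.eq_singleton_iff_nonempty_unique_mem.2 ⟨hmeet i hi, h⟩)
    exact ⟨z, ⟨hzD, hzw⟩, hzB⟩
  have hle := hB.card_le_ncard_of_inter_nonempty hD.sdiff hmeet'
  have hlt := Set.ncard_sdiff_singleton_lt_of_mem hw hD
  omega

theorem ncard_inter_eq_one_of_ncard_le (hB : (s : Set ι).PairwiseDisjoint B)
    (hD : D.Finite) (hmeet : ∀ i ∈ s, (D ∩ B i).Nonempty) (hcard : D.ncard ≤ s.card)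
    {i : ι} (hi : i ∈ s) : (D ∩ B i).ncard = 1 := by
  obtain ⟨w, hwD, hwB⟩ := hmeet i hi
  obtain ⟨j, hj, hDj⟩ := hB.exists_inter_eq_singleton_of_ncard_le hD hmeet hcard hwD
  have hwj : w ∈ B j := (Set.eq_singleton_iff_unique_mem.1 hDj).1.2
  obtain rfl : j = i := hB.elim hj hi <| Set.not_disjoint_iff.2 ⟨w, hwj, hwB⟩
  rw [hDj, Set.ncard_singleton]

end Set.PairwiseDisjoint

section

variable {V : Type*} {k : ℕ}

def colorBlock (C : Fin (k + 1) → Set V) (i : Fin (k + 1)) : Set (V ⊕ Fin (k + 1)) :=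
  Sum.inl '' C i ∪ {Sum.inr i}

variable {C : Fin (k + 1) → Set V}

theorem pairwiseDisjoint_colorBlock (hdisj : ∀ i j, i ≠ j → Disjoint (C i) (C j)) :
    Set.univ.PairwiseDisjoint (colorBlock C) := by
  intro i _ j _ hij
  simp [Function.onFun, colorBlock, Set.disjoint_image_iff Sum.inl_injective, hdisj i j hij,
    hij.symm]

theorem colorGraph_adj_inr (G : SimpleGraph V) {i : Fin (k + 1)} (hi : i ≠ 0)
    {u : V ⊕ Fin (k + 1)} : (colorGraph G C).Adj u (Sum.inr i) ↔ u ∈ Sum.inl '' C i := by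
  cases u <;> simp [colorGraph, colorRel, hi]

theorem IsDominating.inter_colorBlock_nonempty {G : SimpleGraph V} {D : Set (V ⊕ Fin (k + 1))}
    (hD : IsDominating (colorGraph G C) D) {i : Fin (k + 1)} (hi : i ≠ 0) :
    (D ∩ colorBlock C i).Nonempty := by
  rcases hD (Sum.inr i) with hmem | ⟨u, hu, hadj⟩
  · exact ⟨_, hmem, Or.inr rfl⟩
  · exact ⟨u, hu, Or.inl ((colorGraph_adj_inr G hi).1 hadj)⟩

end

theorem dominating_structure_colorGraph_general {V : Type*} [Fintype V] {k : ℕ}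
    (G : SimpleGraph V) (C : Fin (k + 1) → Set V)
    (hdisj : ∀ i j, i ≠ j → Disjoint (C i) (C j))
    (D : Set (V ⊕ Fin (k + 1)))
    (hD : IsDominating (colorGraph G C) D) (hcard : D.ncard = k) :
    (∀ i : Fin (k + 1), i ≠ 0 →
        (D ∩ (Sum.inl '' C i ∪ {Sum.inr i})).ncard = 1) ∧
      ∀ v ∈ D, ∃ i : Fin (k + 1), i ≠ 0 ∧ v ∈ Sum.inl '' C i ∪ {Sum.inr i} := by
  set s : Finset (Fin (k + 1)) := Finset.univ.erase 0
  have hs : ∀ {i}, i ∈ s ↔ i ≠ 0 := by simp [s]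
  have hB : (s : Set (Fin (k + 1))).PairwiseDisjoint (colorBlock C) :=
    (pairwiseDisjoint_colorBlock hdisj).subset (Set.subset_univ _)
  have hmeet : ∀ i ∈ s, (D ∩ colorBlock C i).Nonempty :=
    fun i hi => hD.inter_colorBlock_nonempty (hs.1 hi)
  have hcard_le : D.ncard ≤ s.card := by simp [s, hcard]
  refine ⟨fun i hi => hB.ncard_inter_eq_one_of_ncard_le D.toFinite hmeet hcard_le (hs.2 hi),
    fun v hv => ?_⟩
  obtain ⟨i, hi, hDi⟩ := hB.exists_inter_eq_singleton_of_ncard_le D.toFinite hmeet hcard_le hv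
  exact ⟨i, hs.1 hi, (Set.eq_singleton_iff_unique_mem.1 hDi).1.2⟩

/-- Let `G` be a finite graph whose vertex set is partitioned into blocks
`C 0, …, C k` with `k ≥ 1`. Every dominating set `D` of the constructed
graph `G'` of size `k` contains exactly one vertex from each set
`C i ∪ {aᵢ}`, `1 ≤ i ≤ k`, and no vertex outside the union of these sets. -/
theorem dominating_structure_colorGraph {V : Type*} [Fintype V] {k : ℕ}
    (hk : 1 ≤ k) (G : SimpleGraph V) (C : Fin (k + 1) → Set V)
    (hdisj : ∀ i j, i ≠ j → Disjoint (C i) (C j))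
    (hcover : (⋃ i, C i) = Set.univ)
    (D : Set (V ⊕ Fin (k + 1)))
    (hD : IsDominating (colorGraph G C) D) (hcard : D.ncard = k) :
    (∀ i : Fin (k + 1), i ≠ 0 →
        (D ∩ (Sum.inl '' C i ∪ {Sum.inr i})).ncard = 1) ∧
      ∀ v ∈ D, ∃ i : Fin (k + 1), i ≠ 0 ∧ v ∈ Sum.inl '' C i ∪ {Sum.inr i} :=
  dominating_structure_colorGraph_general G C hdisj D hD hcard
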